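/- arXiv:math/0512519 — 2 statements merged into one kernel-verified Lean document; each statement's English description precedes it below -/
import Mathlib

section
/- In GL(2, Z/4Z), let U_1 be the subgroup generated by [[1,2],[0,3]] and [[1,1],[0,3]], and let U_2 be the subgroup generated by [[1,0],[2,3]] and [[1,0],[1,3]]. Then U_1 and U_2 are almost conjugate (a Gassmann pair) in GL(2, Z/4Z): for every g in GL(2, Z/4Z), the number of elements of U_1 conjugate to g equals the number of elements of U_2 conjugate to g. -/
set_option maxRecDepth 40000
set_option maxHeartbeats 1000000

open Matrix

/-- `GL(2, ZMod 4)`, the group of invertible 2×2 matrices over `ZMod 4`. -/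
abbrev GL2 : Type := Matrix.GeneralLinearGroup (Fin 2) (ZMod 4)

/-- `a = [[3,2],[3,3]]` as an element of `GL(2, ZMod 4)`. -/
def a : GL2 := ⟨!![3, 2; 3, 3], !![1, 2; 3, 1], by decide, by decide⟩

/-- `b = [[1,3],[2,3]]` as an element of `GL(2, ZMod 4)`. -/
def b : GL2 := ⟨!![1, 3; 2, 3], !![3, 1; 2, 1], by decide, by decide⟩

/-- `c = [[3,3],[1,2]]` as an element of `GL(2, ZMod 4)`. -/
def c : GL2 := ⟨!![3, 3; 1, 2], !![2, 3; 1, 1], by decide, by decide⟩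

/-- `U₁` is the subgroup of `GL(2, ZMod 4)` generated by `[[1,2],[0,3]]` and `[[1,1],[0,3]]`. -/
def U1 : Subgroup GL2 :=
  Subgroup.closure {(⟨!![1, 2; 0, 3], !![1, 2; 0, 3], by decide, by decide⟩ : GL2),
                    (⟨!![1, 1; 0, 3], !![1, 1; 0, 3], by decide, by decide⟩ : GL2)}

/-- `U₂` is the subgroup of `GL(2, ZMod 4)` generated by `[[1,0],[2,3]]` and `[[1,0],[1,3]]`. -/
def U2 : Subgroup GL2 :=
  Subgroup.closure {(⟨!![1, 0; 2, 3], !![1, 0; 2, 3], by decide, by decide⟩ : GL2),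
                    (⟨!![1, 0; 1, 3], !![1, 0; 1, 3], by decide, by decide⟩ : GL2)}

/-! ### Auxiliary material -/

abbrev M2 := Matrix (Fin 2) (Fin 2) (ZMod 4)

/-- The "inverse transpose" automorphism of `GL2`. -/
def psi : GL2 →* GL2 where
  toFun x := ⟨(x.inv)ᵀ, (x.val)ᵀ,
    by rw [← Matrix.transpose_mul, x.val_inv, Matrix.transpose_one],
    by rw [← Matrix.transpose_mul, x.inv_val, Matrix.transpose_one]⟩
  map_one' := Units.ext (Matrix.transpose_one)
  map_mul' x y := Units.ext (Matrix.transpose_mul _ _)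

lemma psi_psi (x : GL2) : psi (psi x) = x := Units.ext (Matrix.transpose_transpose x.val)

lemma psi_inj : Function.Injective psi := fun x y h => by
  rw [← psi_psi x, h, psi_psi]

/-- The values of the eight elements of `U1`. -/
def Lv : List M2 := [!![1,0;0,1], !![1,0;0,3], !![1,1;0,1], !![1,1;0,3],
  !![1,2;0,1], !![1,2;0,3], !![1,3;0,1], !![1,3;0,3]]

lemma Lv_mul : ∀ A ∈ Lv, ∀ B ∈ Lv, A * B ∈ Lv := by decide

lemma Lv_inv : ∀ A ∈ Lv, ∃ B, B ∈ Lv ∧ A * B = 1 := by decide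

lemma enum : ∀ x ∈ U1, x.val ∈ Lv := by
  intro x hx
  refine Subgroup.closure_induction (p := fun y _ => y.val ∈ Lv) ?_ ?_ ?_ ?_ hx
  · intro y hy
    simp only [Set.mem_insert_iff, Set.mem_singleton_iff] at hy
    rcases hy with rfl | rfl <;> decide
  · decide
  · intro y z _ _ hyv hzv
    rw [Units.val_mul]
    exact Lv_mul _ hyv _ hzv
  · intro y _ hyv
    obtain ⟨B, hB, hAB⟩ := Lv_inv _ hyv
    have h : (y⁻¹).val = B := left_inv_eq_right_inv y.inv_mul hAB
    rw [h]; exact hB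

lemma conj_helper (x : GL2) (A C Pv Pi : M2) (hval : x.val = A) (hAC : A * C = 1)
    (hP : Pi * Pv = 1) (hPv : Pv * Pi = 1) (h : Pv * A * Pi = Cᵀ) : IsConj x (psi x) := by
  have hinv : x.inv = C := left_inv_eq_right_inv (by rw [← hval]; exact x.inv_val) hAC
  refine isConj_iff.2 ⟨⟨Pv, Pi, hPv, hP⟩, Units.ext ?_⟩
  show Pv * x.val * Pi = (x.inv)ᵀ
  rw [hval, hinv, h]

lemma key : ∀ x ∈ U1, IsConj x (psi x) := by
  intro x hx
  have hxv := enum x hx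
  simp only [Lv, List.mem_cons, List.not_mem_nil, or_false] at hxv
  rcases hxv with h|h|h|h|h|h|h|h
  · exact conj_helper x !![1,0;0,1] !![1,0;0,1] !![1,0;0,1] !![1,0;0,1] h
      (by decide) (by decide) (by decide) (by decide)
  · exact conj_helper x !![1,0;0,3] !![1,0;0,3] !![1,0;0,1] !![1,0;0,1] h
      (by decide) (by decide) (by decide) (by decide)
  · exact conj_helper x !![1,1;0,1] !![1,3;0,1] !![0,1;3,0] !![0,3;1,0] h
      (by decide) (by decide) (by decide) (by decide)
  · exact conj_helper x !![1,1;0,3] !![1,1;0,3] !![2,1;1,0] !![0,1;1,2] h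
      (by decide) (by decide) (by decide) (by decide)
  · exact conj_helper x !![1,2;0,1] !![1,2;0,1] !![0,1;1,0] !![0,1;1,0] h
      (by decide) (by decide) (by decide) (by decide)
  · exact conj_helper x !![1,2;0,3] !![1,2;0,3] !![1,1;1,0] !![0,1;1,3] h
      (by decide) (by decide) (by decide) (by decide)
  · exact conj_helper x !![1,3;0,1] !![1,1;0,1] !![0,1;3,0] !![0,3;1,0] h
      (by decide) (by decide) (by decide) (by decide)
  · exact conj_helper x !![1,3;0,3] !![1,3;0,3] !![2,1;1,0] !![0,1;1,2] h
      (by decide) (by decide) (by decide) (by decide)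

lemma hU2le : U2 ≤ Subgroup.comap psi U1 := by
  rw [U2, Subgroup.closure_le]
  intro y hy
  simp only [Set.mem_insert_iff, Set.mem_singleton_iff] at hy
  rcases hy with rfl | rfl
  · show psi _ ∈ U1
    rw [show psi (⟨!![1, 0; 2, 3], !![1, 0; 2, 3], by decide, by decide⟩ : GL2) =
        (⟨!![1, 2; 0, 3], !![1, 2; 0, 3], by decide, by decide⟩ : GL2) from Units.ext (by decide)]
    exact Subgroup.subset_closure (Set.mem_insert _ _)
  · show psi _ ∈ U1
    rw [show psi (⟨!![1, 0; 1, 3], !![1, 0; 1, 3], by decide, by decide⟩ : GL2) =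
        (⟨!![1, 1; 0, 3], !![1, 1; 0, 3], by decide, by decide⟩ : GL2) from Units.ext (by decide)]
    exact Subgroup.subset_closure (Set.mem_insert_of_mem _ rfl)

lemma hU1le : U1 ≤ Subgroup.comap psi U2 := by
  rw [U1, Subgroup.closure_le]
  intro y hy
  simp only [Set.mem_insert_iff, Set.mem_singleton_iff] at hy
  rcases hy with rfl | rfl
  · show psi _ ∈ U2
    rw [show psi (⟨!![1, 2; 0, 3], !![1, 2; 0, 3], by decide, by decide⟩ : GL2) =
        (⟨!![1, 0; 2, 3], !![1, 0; 2, 3], by decide, by decide⟩ : GL2) from Units.ext (by decide)]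
    exact Subgroup.subset_closure (Set.mem_insert _ _)
  · show psi _ ∈ U2
    rw [show psi (⟨!![1, 1; 0, 3], !![1, 1; 0, 3], by decide, by decide⟩ : GL2) =
        (⟨!![1, 0; 1, 3], !![1, 0; 1, 3], by decide, by decide⟩ : GL2) from Units.ext (by decide)]
    exact Subgroup.subset_closure (Set.mem_insert_of_mem _ rfl)

/-- `U₁` and `U₂` are almost conjugate (a Gassmann pair) in `GL(2, ZMod 4)`: for every
`g` the conjugacy class of `g` meets `U₁` and `U₂` in the same number of elements. -/
theorem stmt_16 :
    ∀ g : GL2,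
      {x | x ∈ U1 ∧ IsConj g x}.ncard = {x | x ∈ U2 ∧ IsConj g x}.ncard := by
  intro g
  have himg : {x | x ∈ U2 ∧ IsConj g x} = psi '' {x | x ∈ U1 ∧ IsConj g x} := by
    ext y
    simp only [Set.mem_setOf_eq, Set.mem_image]
    constructor
    · rintro ⟨hy2, hc⟩
      have h1 : psi y ∈ U1 := hU2le hy2
      have h2 : IsConj (psi y) y := by
        have := key (psi y) h1
        rwa [psi_psi] at this
      exact ⟨psi y, ⟨h1, hc.trans h2.symm⟩, psi_psi y⟩
    · rintro ⟨z, ⟨hz1, hcz⟩, rfl⟩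
      exact ⟨hU1le hz1, hcz.trans (key z hz1)⟩
  rw [himg, Set.ncard_image_of_injective _ psi_inj]
end

section
/- In GL(2, Z/4Z), let U_1 be the subgroup generated by [[1,2],[0,3]] and [[1,1],[0,3]], and let U_2 be the subgroup generated by [[1,0],[2,3]] and [[1,0],[1,3]]. Then U_1 and U_2 are not conjugate in GL(2, Z/4Z): there is no g in GL(2, Z/4Z) with gU_1g^{-1} = U_2. -/
/-!
`U₁` fixes the basis vector `e₀ = (1, 0)` of `(ZMod 4)²`, so a conjugate `g U₁ g⁻¹` fixes `g e₀`,
the first column of `g`. The only vectors fixed by `U₂` are `(0, y)` with `2 y = 0`, and a matrix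
with such a first column has determinant `-g₀₁ y`, which is killed by `2` and hence is not a unit
in `ZMod 4`.
-/

open MulAction

theorem le_stabilizer_smul_of_conj_eq {G α : Type*} [Group G] [MulAction G α]
    {H K : Subgroup G} {g : G} {x : α}
    (hconj : {k | ∃ u ∈ H, g * u * g⁻¹ = k} = (K : Set G)) (hH : H ≤ stabilizer G x) :
    K ≤ stabilizer G (g • x) := by
  intro k hk
  rw [← SetLike.mem_coe, ← hconj] at hk
  obtain ⟨u, hu, rfl⟩ := hk
  rw [mem_stabilizer_iff, mul_smul, mul_smul, inv_smul_smul, hH hu]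

theorem Matrix.not_isUnit_det_fin_two_of_two_mul_eq_zero {R : Type*} [CommRing R]
    (h2 : (2 : R) ≠ 0) (M : Matrix (Fin 2) (Fin 2) R) (h00 : M 0 0 = 0) (h10 : 2 * M 1 0 = 0) :
    ¬ IsUnit M.det := by
  intro hdet
  have h2det : 2 * M.det = 0 := by
    rw [Matrix.det_fin_two, h00]
    linear_combination (-M 0 1) * h10
  exact h2 ((hdet.mul_left_eq_zero).mp h2det)

theorem U1_le_stabilizer : U1 ≤ stabilizer GL2 (Pi.single 0 1 : Fin 2 → ZMod 4) := by
  rw [U1, Subgroup.closure_le]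
  rintro _ (rfl | rfl) <;> rw [SetLike.mem_coe, mem_stabilizer_iff] <;> decide

theorem eq_of_le_stabilizer_U2 {v : Fin 2 → ZMod 4} (hv : U2 ≤ stabilizer GL2 v) :
    v 0 = 0 ∧ 2 * v 1 = 0 := by
  have fixed_by_generators : ∀ v : Fin 2 → ZMod 4,
      (⟨!![1, 0; 2, 3], !![1, 0; 2, 3], by decide, by decide⟩ : GL2) • v = v →
      (⟨!![1, 0; 1, 3], !![1, 0; 1, 3], by decide, by decide⟩ : GL2) • v = v →
      v 0 = 0 ∧ 2 * v 1 = 0 := by decide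
  exact fixed_by_generators v (hv (Subgroup.subset_closure (Set.mem_insert _ _)))
    (hv (Subgroup.subset_closure (Set.mem_insert_of_mem _ rfl)))

/-- `U₁` and `U₂` are not conjugate in `GL(2, ZMod 4)`: no `g` satisfies `g U₁ g⁻¹ = U₂`. -/
theorem stmt_17 :
    ¬ ∃ g : GL2, {x | ∃ u ∈ U1, g * u * g⁻¹ = x} = (U2 : Set GL2) := by
  rintro ⟨g, hg⟩
  obtain ⟨h00, h10⟩ := eq_of_le_stabilizer_U2 (le_stabilizer_smul_of_conj_eq hg U1_le_stabilizer)
  have hcol : g • (Pi.single 0 1 : Fin 2 → ZMod 4) = (g : Matrix (Fin 2) (Fin 2) (ZMod 4)).col 0 :=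
    Matrix.mulVec_single_one _ _
  rw [hcol, Matrix.col_apply] at h00 h10
  exact Matrix.not_isUnit_det_fin_two_of_two_mul_eq_zero (by decide) _ h00 h10
    (Matrix.isUnits_det_units g)
end
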